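/- arXiv:2304.09589 — 2 statements merged into one kernel-verified Lean document; each statement's English description precedes it below -/
import Mathlib

section
/- Let E be a Banach space and S, B with B ∈ L(E), and let f : [0,T] → ℝ≥0 be continuous. If f(t) ≤ M e^{κ t} c₀ + M‖B‖ ∫₀^t e^{κ(t−s)} (t−s)^{−α} f(s) ds for all t ∈ [0,T], with constants M ≥ 1, κ ∈ ℝ, α ∈ [0,1), c₀ ≥ 0, then there exist constants c ≥ 1 and ω ∈ ℝ (depending only on M, ‖B‖, κ, α, T) such that f(t) ≤ c e^{ω t} c₀ for all t ∈ [0,T]. -/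
/-!
Bielecki's weighted-norm argument. Put `ω = κ + l` and measure `f` by `sup f(t) e^{-ωt}`.
Against the weight `e^{ωs}` the kernel `e^{κ(t-s)} (t-s)^{-α}` turns into `e^{-l(t-s)} (t-s)^{-α}`,
so the integral term costs at most `M ‖B‖ ∫₀^T e^{-lu} u^{-α} du` in this norm. Since `u^{-α}` is
integrable (`α < 1`), dominated convergence sends that integral to `0` as `l → ∞`; once it is
below `1/2`, evaluating the inequality where `f(t) e^{-ωt}` is maximal gives
`sup f(t) e^{-ωt} ≤ 2 M c₀`.
-/

open MeasureTheory Set Filter Topology Real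
open scoped Interval

theorem tendsto_integral_exp_neg_mul_rpow {T α : ℝ} (hT : 0 ≤ T) (hα : α < 1) :
    Tendsto (fun l : ℝ => ∫ u in (0:ℝ)..T, exp (-(l * u)) * u ^ (-α)) atTop (𝓝 0) := by
  have hmeas (l : ℝ) : AEStronglyMeasurable (fun u : ℝ => exp (-(l * u)) * u ^ (-α))
      (volume.restrict (Ι 0 T)) := by
    fun_prop
  have hbound : ∀ᶠ l in atTop, ∀ᵐ u, u ∈ Ι 0 T → ‖exp (-(l * u)) * u ^ (-α)‖ ≤ u ^ (-α) := by
    filter_upwards [eventually_ge_atTop 0] with l hl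
    refine ae_of_all _ fun u hu => ?_
    rw [uIoc_of_le hT] at hu
    have hexp : exp (-(l * u)) ≤ 1 := exp_le_one_iff.2 (by nlinarith [hu.1])
    rw [norm_mul, norm_of_nonneg (exp_nonneg _), norm_of_nonneg (rpow_nonneg hu.1.le _)]
    exact mul_le_of_le_one_left (rpow_nonneg hu.1.le _) hexp
  have hlim : ∀ᵐ u, u ∈ Ι 0 T → Tendsto (fun l : ℝ => exp (-(l * u)) * u ^ (-α)) atTop
      (𝓝 0) := by
    refine ae_of_all _ fun u hu => ?_
    rw [uIoc_of_le hT] at hu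
    simpa using (tendsto_exp_neg_atTop_nhds_zero.comp
      (tendsto_id.atTop_mul_const hu.1)).mul_const (u ^ (-α))
  simpa using intervalIntegral.tendsto_integral_filter_of_dominated_convergence _
    (Eventually.of_forall hmeas) hbound
    (intervalIntegral.intervalIntegrable_rpow' (by linarith)) hlim

theorem intervalIntegrable_exp_mul_sub_mul_rpow_mul {α : ℝ} (hα : α < 1) (t κ : ℝ) {g : ℝ → ℝ}
    (hg : ContinuousOn g [[0, t]]) :
    IntervalIntegrable (fun s => exp (κ * (t - s)) * (t - s) ^ (-α) * g s) volume 0 t := by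
  have hrpow : IntervalIntegrable (fun s : ℝ => (t - s) ^ (-α)) volume 0 t := by
    simpa using (intervalIntegral.intervalIntegrable_rpow' (a := t) (b := 0) (r := -α)
      (by linarith)).comp_sub_left t
  refine (hrpow.continuousOn_mul (g := fun s => exp (κ * (t - s)) * g s)
    ((by fun_prop : Continuous fun s => exp (κ * (t - s))).continuousOn.mul hg)).congr ?_
  exact fun s _ => by ring

theorem integral_exp_neg_mul_rpow_le_of_le {α l t T : ℝ} (hα : α < 1) (ht : 0 ≤ t) (htT : t ≤ T) :
    ∫ u in (0:ℝ)..t, exp (-(l * u)) * u ^ (-α) ≤ ∫ u in (0:ℝ)..T, exp (-(l * u)) * u ^ (-α) := by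
  refine intervalIntegral.integral_mono_interval le_rfl ht htT
    ((ae_restrict_mem measurableSet_Ioc).mono fun u hu =>
      mul_nonneg (exp_nonneg _) (rpow_nonneg hu.1.le _)) ?_
  exact (intervalIntegral.intervalIntegrable_rpow' (by linarith)).continuousOn_mul (by fun_prop)

theorem integral_exp_mul_sub_mul_rpow_mul_le {α κ l t N : ℝ} (hα : α < 1) (ht : 0 ≤ t)
    {f : ℝ → ℝ} (hf : ContinuousOn f (Icc 0 t))
    (hfN : ∀ s ∈ Icc 0 t, f s ≤ N * exp ((κ + l) * s)) :
    ∫ s in (0:ℝ)..t, exp (κ * (t - s)) * (t - s) ^ (-α) * f s ≤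
      N * exp ((κ + l) * t) * ∫ u in (0:ℝ)..t, exp (-(l * u)) * u ^ (-α) := by
  have hmono : ∫ s in (0:ℝ)..t, exp (κ * (t - s)) * (t - s) ^ (-α) * f s ≤
      ∫ s in (0:ℝ)..t, exp (κ * (t - s)) * (t - s) ^ (-α) * (N * exp ((κ + l) * s)) := by
    refine intervalIntegral.integral_mono_on ht
      (intervalIntegrable_exp_mul_sub_mul_rpow_mul hα t κ (by rwa [uIcc_of_le ht]))
      (intervalIntegrable_exp_mul_sub_mul_rpow_mul hα t κ (by fun_prop)) fun s hs => ?_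
    have : 0 ≤ t - s := by linarith [hs.2]
    exact mul_le_mul_of_nonneg_left (hfN s hs) (by positivity)
  have hshift : ∫ s in (0:ℝ)..t, exp (κ * (t - s)) * (t - s) ^ (-α) * (N * exp ((κ + l) * s)) =
      N * exp ((κ + l) * t) * ∫ u in (0:ℝ)..t, exp (-(l * u)) * u ^ (-α) := by
    have hexp (s : ℝ) : exp (κ * (t - s)) * exp ((κ + l) * s) =
        exp ((κ + l) * t) * exp (-(l * (t - s))) := by
      rw [← exp_add, ← exp_add]; ring_nf
    calc _ = ∫ s in (0:ℝ)..t, N * exp ((κ + l) * t) * (exp (-(l * (t - s))) * (t - s) ^ (-α)) := by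
          refine intervalIntegral.integral_congr fun s _ => ?_
          linear_combination N * (t - s) ^ (-α) * hexp s
      _ = _ := by
          rw [intervalIntegral.integral_const_mul,
            intervalIntegral.integral_comp_sub_left (fun u => exp (-(l * u)) * u ^ (-α)) t]
          simp
  exact hmono.trans_eq hshift

theorem le_div_one_sub_mul_exp_of_le_add_mul {f : ℝ → ℝ} {T ω a q : ℝ} (hT : 0 ≤ T) (hq : q < 1)
    (hf : ContinuousOn f (Icc 0 T))
    (h : ∀ N, (∀ s ∈ Icc 0 T, f s ≤ N * exp (ω * s)) →
      ∀ t ∈ Icc 0 T, f t ≤ (a + q * N) * exp (ω * t)) :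
    ∀ t ∈ Icc 0 T, f t ≤ a / (1 - q) * exp (ω * t) := by
  obtain ⟨t₀, ht₀, hmax⟩ := isCompact_Icc.exists_isMaxOn (nonempty_Icc.2 hT)
    (hf.div (by fun_prop) fun s _ => (exp_pos (ω * s)).ne')
  set N := f t₀ / exp (ω * t₀)
  have hfN : ∀ s ∈ Icc 0 T, f s ≤ N * exp (ω * s) :=
    fun s hs => (div_le_iff₀ (exp_pos _)).1 (hmax hs)
  have hN : N ≤ a + q * N := (div_le_iff₀ (exp_pos _)).2 (h N hfN t₀ ht₀)
  have hNa : N ≤ a / (1 - q) := by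
    rw [le_div_iff₀ (by linarith)]; linarith
  exact fun t ht => (hfN t ht).trans (by gcongr)

/-- Singular Gronwall inequality with exponential weight: if a continuous nonnegative
`f` on `[0,T]` satisfies
`f t ≤ M e^{κ t} c₀ + M ‖B‖ ∫₀^t e^{κ(t−s)} (t−s)^{−α} f s ds`,
then `f t ≤ c e^{ω t} c₀` with constants depending only on `M, ‖B‖, κ, α, T`. -/
theorem stmt_4 {E : Type*} [NormedAddCommGroup E] [NormedSpace ℝ E]
    (B : E →L[ℝ] E) (T M κ c₀ : ℝ) (α : ℝ) (hα : α ∈ Set.Ico (0:ℝ) 1)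
    (hT : 0 < T) (hM : 1 ≤ M) (hc₀ : 0 ≤ c₀) :
    ∃ c ≥ (1:ℝ), ∃ ω : ℝ,
      ∀ f : ℝ → ℝ, ContinuousOn f (Set.Icc 0 T) →
        (∀ t ∈ Set.Icc (0:ℝ) T, 0 ≤ f t) →
        (∀ t ∈ Set.Icc (0:ℝ) T,
          f t ≤ M * Real.exp (κ * t) * c₀ +
            M * ‖B‖ * ∫ s in (0:ℝ)..t, Real.exp (κ * (t - s)) * (t - s) ^ (-α) * f s) →
        ∀ t ∈ Set.Icc (0:ℝ) T, f t ≤ c * Real.exp (ω * t) * c₀ := by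
  have hK : 0 ≤ M * ‖B‖ := mul_nonneg (by linarith) (norm_nonneg B)
  obtain ⟨l, hJ, hl⟩ : ∃ l : ℝ, M * ‖B‖ * (∫ u in (0:ℝ)..T, exp (-(l * u)) * u ^ (-α)) < 1 / 2 ∧
      0 ≤ l :=
    ((((tendsto_integral_exp_neg_mul_rpow hT.le hα.2).const_mul (M * ‖B‖)).eventually_lt_const
      (by norm_num)).and (eventually_ge_atTop 0)).exists
  refine ⟨2 * M, by linarith, κ + l, fun f hf hf₀ hfB => ?_⟩
  have hstep (N : ℝ) (hN : ∀ s ∈ Icc 0 T, f s ≤ N * exp ((κ + l) * s)) (t : ℝ) (ht : t ∈ Icc 0 T) :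
      f t ≤ (M * c₀ + 1 / 2 * N) * exp ((κ + l) * t) := by
    have hN₀ : 0 ≤ N := by simpa using (hf₀ 0 ⟨le_rfl, hT.le⟩).trans (hN 0 ⟨le_rfl, hT.le⟩)
    have hκ : exp (κ * t) ≤ exp ((κ + l) * t) := exp_le_exp.2 (by nlinarith [ht.1])
    have hI := (integral_exp_mul_sub_mul_rpow_mul_le hα.2 ht.1
      (hf.mono (Icc_subset_Icc_right ht.2)) fun s hs => hN s (Icc_subset_Icc_right ht.2 hs)).trans
      (mul_le_mul_of_nonneg_left (integral_exp_neg_mul_rpow_le_of_le (l := l) hα.2 ht.1 ht.2)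
        (by positivity))
    calc f t ≤ M * exp (κ * t) * c₀ +
          M * ‖B‖ * ∫ s in (0:ℝ)..t, exp (κ * (t - s)) * (t - s) ^ (-α) * f s := hfB t ht
      _ ≤ M * exp ((κ + l) * t) * c₀ + M * ‖B‖ * (N * exp ((κ + l) * t) *
          ∫ u in (0:ℝ)..T, exp (-(l * u)) * u ^ (-α)) := by gcongr
      _ ≤ (M * c₀ + 1 / 2 * N) * exp ((κ + l) * t) := by
          nlinarith [mul_le_mul_of_nonneg_left hJ.le (mul_nonneg hN₀ (exp_pos ((κ + l) * t)).le)]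
  exact fun t ht =>
    (le_div_one_sub_mul_exp_of_le_add_mul hT.le (by norm_num) hf hstep t ht).trans_eq (by ring)
end

section
/- Let f : [0, T] → ℝ≥0 be continuous and suppose f(t) ≤ c₀ + C ∫₀^t (t−s)^{−α} f(s) ds for all t ∈ [0,T], with α ∈ [0,1), C ≥ 0, c₀ ≥ 0. Then there is a constant K = K(C, α, T) such that f(t) ≤ K c₀ for all t ∈ [0,T]. -/
open intervalIntegral MeasureTheory Set

private def gronB (D : ℝ) : ℕ → ℝ
  | 0 => 1
  | k + 1 => (1 + 2 * D) * gronB D k + 2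

private lemma gronB_one_le {D : ℝ} (hD : 0 ≤ D) : ∀ k, 1 ≤ gronB D k := by
  intro k
  induction k with
  | zero => simp [gronB]
  | succ k ih => simp only [gronB]; nlinarith

private lemma gronB_mono {D : ℝ} (hD : 0 ≤ D) (k : ℕ) : gronB D k ≤ gronB D (k + 1) := by
  have := gronB_one_le hD k
  simp only [gronB]; nlinarith

/-- Singular Gronwall lemma: if a continuous nonnegative `f` on `[0,T]` satisfies
`f t ≤ c₀ + C ∫₀^t (t−s)^{−α} f s ds` with `α ∈ [0,1)`, then `f t ≤ K c₀` on
`[0,T]`, where `K` depends only on `C`, `α` and `T` (not on `c₀` or `f`). -/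
theorem stmt_18 (T C α : ℝ) (hT : 0 < T) (hC : 0 ≤ C) (hα : α ∈ Set.Ico (0:ℝ) 1) :
    ∃ K : ℝ, ∀ (f : ℝ → ℝ) (c₀ : ℝ), 0 ≤ c₀ →
      ContinuousOn f (Set.Icc 0 T) →
      (∀ t ∈ Set.Icc (0:ℝ) T, 0 ≤ f t) →
      (∀ t ∈ Set.Icc (0:ℝ) T, f t ≤ c₀ + C * ∫ s in (0:ℝ)..t, (t - s) ^ (-α) * f s) →
      ∀ t ∈ Set.Icc (0:ℝ) T, f t ≤ K * c₀ := by
  obtain ⟨hα0, hα1⟩ := hα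
  set β := 1 - α with hβdef
  have hβ0 : 0 < β := by simp only [hβdef]; linarith
  have hb0 : 0 < β / (2 * (C + 1)) := by positivity
  set h : ℝ := min T ((β / (2 * (C + 1))) ^ (1 / β)) with hhdef
  have hhpos : 0 < h := lt_min hT (Real.rpow_pos_of_pos hb0 _)
  have hhT : h ≤ T := min_le_left _ _
  have hkey : C * (h ^ β / β) ≤ 1 / 2 := by
    set q := β / (2 * (C + 1)) with hqdef
    have h1 : h ^ β ≤ q := by
      calc h ^ β ≤ (q ^ (1 / β)) ^ β :=
            Real.rpow_le_rpow hhpos.le (min_le_right _ _) hβ0.le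
        _ = q ^ ((1 / β) * β) := (Real.rpow_mul hb0.le _ _).symm
        _ = q := by rw [one_div_mul_cancel hβ0.ne', Real.rpow_one]
    have h2 : C * h ^ β ≤ C * q := mul_le_mul_of_nonneg_left h1 hC
    have hq : q * (2 * (C + 1)) = β := div_mul_cancel₀ _ (by positivity)
    rw [← mul_div_assoc, div_le_iff₀ hβ0]
    nlinarith [hb0.le]
  set D : ℝ := C * h ^ (-α) * T with hDdef
  have hD0 : 0 ≤ D := by
    have := Real.rpow_nonneg hhpos.le (-α); positivity
  set n : ℕ := ⌈T / h⌉₊ with hndef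
  refine ⟨gronB D n, ?_⟩
  intro f c₀ hc₀ hfc hfpos hineq
  have main : ∀ k : ℕ, ∀ t ∈ Set.Icc 0 (min ((k : ℝ) * h) T), f t ≤ gronB D k * c₀ := by
    intro k
    induction k with
    | zero =>
      intro t ht
      simp only [Nat.cast_zero, zero_mul, min_eq_left hT.le, Icc_self, mem_singleton_iff] at ht
      subst ht
      have := hineq 0 ⟨le_refl _, hT.le⟩
      simpa [gronB] using this
    | succ k ih =>
      set u : ℝ := min (((k : ℝ) + 1) * h) T with hudef
      have hu0 : 0 ≤ u := le_min (by positivity) hT.le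
      have huT : u ≤ T := min_le_right _ _
      intro t ht
      push_cast at ht
      rw [← hudef] at ht
      -- maximum of f on [0, u]
      obtain ⟨ts, hts, hmax⟩ := isCompact_Icc.exists_isMaxOn (α := ℝ) (β := ℝ)
        (Set.nonempty_Icc.mpr hu0) (hfc.mono (Icc_subset_Icc le_rfl huT))
      have hmax' : ∀ x ∈ Icc (0:ℝ) u, f x ≤ f ts := fun x hx => hmax hx
      refine le_trans (hmax' t ht) ?_
      obtain ⟨hts0, htsu⟩ := hts
      have htsT : ts ≤ T := htsu.trans huT
      by_cases hcase : ts ≤ (k : ℝ) * h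
      · have h1 : f ts ≤ gronB D k * c₀ := ih ts ⟨hts0, le_min hcase htsT⟩
        have h2 : gronB D k * c₀ ≤ gronB D (k + 1) * c₀ :=
          mul_le_mul_of_nonneg_right (gronB_mono hD0 k) hc₀
        exact h1.trans h2
      · push_neg at hcase
        set M := f ts with hMdef
        have hM0 : 0 ≤ M := hfpos ts ⟨hts0, htsT⟩
        set a : ℝ := max 0 (ts - h) with hadef
        have ha0 : 0 ≤ a := le_max_left _ _
        have hats : a ≤ ts := max_le hts0 (by linarith)
        have htsa : ts - a ≤ h := by
          have : ts - h ≤ a := le_max_right _ _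
          linarith
        have hBk0 : (0:ℝ) ≤ gronB D k := le_trans zero_le_one (gronB_one_le hD0 k)
        -- integrability
        have huIcc : uIcc (0:ℝ) ts = Icc 0 ts := uIcc_of_le hts0
        have hker : IntervalIntegrable (fun s => (ts - s) ^ (-α)) volume 0 ts := by
          have := (intervalIntegrable_rpow' (a := 0) (b := ts)
            (by linarith : (-1:ℝ) < -α)).comp_sub_left ts
          simpa using this.symm
        have hfcont : ContinuousOn f (uIcc 0 ts) := by
          rw [huIcc]; exact hfc.mono (Icc_subset_Icc le_rfl htsT)
        have hprod : IntervalIntegrable (fun s => (ts - s) ^ (-α) * f s) volume 0 ts :=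
          hker.mul_continuousOn hfcont
        have hsub1 : uIcc (0:ℝ) a ⊆ uIcc 0 ts := by
          rw [huIcc, uIcc_of_le ha0]; exact Icc_subset_Icc le_rfl hats
        have hsub2 : uIcc a ts ⊆ uIcc (0:ℝ) ts := by
          rw [huIcc, uIcc_of_le hats]; exact Icc_subset_Icc ha0 le_rfl
        have hprod1 : IntervalIntegrable (fun s => (ts - s) ^ (-α) * f s) volume 0 a :=
          hprod.mono_set hsub1
        have hprod2 : IntervalIntegrable (fun s => (ts - s) ^ (-α) * f s) volume a ts :=
          hprod.mono_set hsub2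
        have hker2 : IntervalIntegrable (fun s => (ts - s) ^ (-α)) volume a ts :=
          hker.mono_set hsub2
        have hsplit : (∫ s in (0:ℝ)..ts, (ts - s) ^ (-α) * f s)
            = (∫ s in (0:ℝ)..a, (ts - s) ^ (-α) * f s)
              + ∫ s in a..ts, (ts - s) ^ (-α) * f s :=
          (integral_add_adjacent_intervals hprod1 hprod2).symm
        -- bound on [0, a]
        have hI1 : (∫ s in (0:ℝ)..a, (ts - s) ^ (-α) * f s)
            ≤ h ^ (-α) * T * (gronB D k * c₀) := by
          rcases ha0.eq_or_lt with h0 | hapos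
          · rw [← h0, intervalIntegral.integral_same]
            have hr : (0:ℝ) ≤ h ^ (-α) := Real.rpow_nonneg hhpos.le _
            have := mul_nonneg (mul_nonneg hr hT.le) (mul_nonneg hBk0 hc₀)
            linarith
          · have haeq : a = ts - h := by
              rcases max_choice 0 (ts - h) with h' | h'
              · rw [← hadef] at h'; rw [h'] at hapos; exact absurd hapos (lt_irrefl 0)
              · rw [← hadef] at h'; exact h'
            have hstep : ∀ s ∈ Icc (0:ℝ) a,
                (ts - s) ^ (-α) * f s ≤ h ^ (-α) * (gronB D k * c₀) := by
              intro s hs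
              obtain ⟨hs0, hsa⟩ := hs
              have h1 : h ≤ ts - s := by rw [haeq] at hsa; linarith
              have hk1 : (ts - s) ^ (-α) ≤ h ^ (-α) :=
                Real.rpow_le_rpow_of_nonpos hhpos h1 (by linarith)
              have hsT : s ≤ T := le_trans (hsa.trans hats) htsT
              have hskh : s ≤ (k : ℝ) * h := by
                have h2 : ts ≤ ((k : ℝ) + 1) * h := le_trans htsu (min_le_left _ _)
                rw [haeq] at hsa; linarith
              have hfs : f s ≤ gronB D k * c₀ := ih s ⟨hs0, le_min hskh hsT⟩
              have hfs0 : 0 ≤ f s := hfpos s ⟨hs0, hsT⟩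
              exact mul_le_mul hk1 hfs hfs0 (Real.rpow_nonneg hhpos.le _)
            calc (∫ s in (0:ℝ)..a, (ts - s) ^ (-α) * f s)
                ≤ ∫ _s in (0:ℝ)..a, h ^ (-α) * (gronB D k * c₀) :=
                  intervalIntegral.integral_mono_on ha0 hprod1 intervalIntegrable_const hstep
              _ = a * (h ^ (-α) * (gronB D k * c₀)) := by
                  rw [intervalIntegral.integral_const]; simp [smul_eq_mul]
              _ ≤ T * (h ^ (-α) * (gronB D k * c₀)) := by
                  apply mul_le_mul_of_nonneg_right _ (by positivity)
                  rw [haeq]; linarith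
              _ = h ^ (-α) * T * (gronB D k * c₀) := by ring
        -- bound on [a, ts]
        have hI2 : (∫ s in a..ts, (ts - s) ^ (-α) * f s) ≤ (ts - a) ^ β / β * M := by
          have hconst : IntervalIntegrable (fun s => (ts - s) ^ (-α) * M) volume a ts :=
            hker2.mul_const M
          have hmono : ∀ s ∈ Icc a ts, (ts - s) ^ (-α) * f s ≤ (ts - s) ^ (-α) * M := by
            intro s hs
            have hker_nonneg : 0 ≤ (ts - s) ^ (-α) :=
              Real.rpow_nonneg (by linarith [hs.2]) _
            exact mul_le_mul_of_nonneg_left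
              (hmax' s ⟨le_trans ha0 hs.1, hs.2.trans htsu⟩) hker_nonneg
          calc (∫ s in a..ts, (ts - s) ^ (-α) * f s)
              ≤ ∫ s in a..ts, (ts - s) ^ (-α) * M :=
                intervalIntegral.integral_mono_on hats hprod2 hconst hmono
            _ = (∫ s in a..ts, (ts - s) ^ (-α)) * M := by
                rw [← intervalIntegral.integral_mul_const]
            _ = (ts - a) ^ β / β * M := by
                congr 1
                have hcs : (∫ s in a..ts, (ts - s) ^ (-α))
                    = ∫ x in (ts - ts)..(ts - a), x ^ (-α) :=
                  intervalIntegral.integral_comp_sub_left (fun x => x ^ (-α)) ts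
                rw [hcs, sub_self, integral_rpow (Or.inl (by linarith : (-1:ℝ) < -α)),
                  Real.zero_rpow (by linarith : -α + 1 ≠ 0)]
                rw [show -α + 1 = β by rw [hβdef]; ring]
                ring
        -- combine
        have happ := hineq ts ⟨hts0, htsT⟩
        rw [hsplit] at happ
        have hCI1 : C * (∫ s in (0:ℝ)..a, (ts - s) ^ (-α) * f s)
            ≤ D * (gronB D k * c₀) := by
          calc C * (∫ s in (0:ℝ)..a, (ts - s) ^ (-α) * f s)
              ≤ C * (h ^ (-α) * T * (gronB D k * c₀)) := mul_le_mul_of_nonneg_left hI1 hC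
            _ = D * (gronB D k * c₀) := by rw [hDdef]; ring
        have hCI2 : C * (∫ s in a..ts, (ts - s) ^ (-α) * f s) ≤ 1 / 2 * M := by
          have h6 : (ts - a) ^ β ≤ h ^ β := Real.rpow_le_rpow (by linarith) htsa hβ0.le
          have h7 : C * ((ts - a) ^ β / β) ≤ C * (h ^ β / β) := by
            apply mul_le_mul_of_nonneg_left _ hC
            exact (div_le_div_iff_of_pos_right hβ0).mpr h6
          calc C * (∫ s in a..ts, (ts - s) ^ (-α) * f s)
              ≤ C * ((ts - a) ^ β / β * M) := mul_le_mul_of_nonneg_left hI2 hC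
            _ = C * ((ts - a) ^ β / β) * M := by ring
            _ ≤ 1 / 2 * M := mul_le_mul_of_nonneg_right (h7.trans hkey) hM0
        have hfin : M ≤ c₀ + D * (gronB D k * c₀) + 1 / 2 * M := by nlinarith [happ]
        show M ≤ gronB D (k + 1) * c₀
        simp only [gronB]
        nlinarith [mul_nonneg hBk0 hc₀, mul_nonneg hD0 (mul_nonneg hBk0 hc₀)]
  intro t ht
  have hTn : T ≤ (n : ℝ) * h := by
    rw [hndef]
    have h1 := Nat.le_ceil (T / h)
    calc T = T / h * h := by field_simp
      _ ≤ (⌈T / h⌉₊ : ℝ) * h := mul_le_mul_of_nonneg_right h1 hhpos.le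
  exact main n t (by rw [min_eq_right hTn]; exact ht)
end
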